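/- The CEK commutative transitions terminate with local linear bound: defining the measure μ(t̄ | e | π) = |t̄| + |t̄'| if the top of π is an argument entry (t̄', e'), and μ = |t̄| otherwise, both commutative transitions →c1 and →c2 strictly decrease μ; consequently any sequence of consecutive commutative transitions from a reachable state has length at most 2·|t̄₀| where t̄₀ is the initial code. -/

import Mathlib

/-- Pure λ-terms (codes of the machine). -/
inductive PTerm : Type
  | var : ℕ → PTerm
  | lam : ℕ → PTerm → PTerm
  | app : PTerm → PTerm → PTerm
deriving DecidableEq

def PTerm.fv : PTerm → Finset ℕ
  | .var x => {x}
  | .lam x t => t.fv.erase x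
  | .app t u => t.fv ∪ u.fv

def PTerm.size : PTerm → ℕ
  | .var _ => 1
  | .lam _ t => t.size + 1
  | .app t u => t.size + u.size + 1

mutual
  /-- CEK closures. -/
  inductive CClo : Type
    | mk : PTerm → CEnv → CClo
  /-- CEK local environments. -/
  inductive CEnv : Type
    | nil : CEnv
    | cons : ℕ → CClo → CEnv → CEnv
end

def CEnv.lookup : CEnv → ℕ → Option CClo
  | .nil, _ => none
  | .cons y c e, x => if y = x then some c else e.lookup x

/-- CEK stack entries: argument entries `arg(t̄,e)` and function entries
    `fun(t̄,e)`. -/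
inductive CEntry : Type
  | arg : PTerm → CEnv → CEntry
  | fn : PTerm → CEnv → CEntry

/-- CEK states. -/
structure CState : Type where
  code : PTerm
  env : CEnv
  stack : List CEntry

/-- First commutative transition: processing an application pushes an argument
    entry and focuses on the function. -/
inductive CStep1 : CState → CState → Prop
  | step (t u : PTerm) (e : CEnv) (π : List CEntry) :
      CStep1 ⟨.app t u, e, π⟩ ⟨t, e, .arg u e :: π⟩

/-- Second commutative transition: once the function is evaluated to a value,
    the focus moves to the argument, pushing a function entry. -/
inductive CStep2 : CState → CState → Prop
  | step (x : ℕ) (t u : PTerm) (e e' : CEnv) (π : List CEntry) :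
      CStep2 ⟨.lam x t, e, .arg u e' :: π⟩ ⟨u, e', .fn (.lam x t) e :: π⟩

/-- Multiplicative transition. -/
inductive CStepM : CState → CState → Prop
  | step (x y : ℕ) (t u : PTerm) (e e' : CEnv) (π : List CEntry) :
      CStepM ⟨.lam y u, e, .fn (.lam x t) e' :: π⟩
             ⟨t, CEnv.cons x (CClo.mk (.lam y u) e) e', π⟩

/-- Exponential transition. -/
inductive CStepE : CState → CState → Prop
  | step (x : ℕ) (t : PTerm) (e e' : CEnv) (π : List CEntry) :
      e.lookup x = some (CClo.mk t e') →
      CStepE ⟨.var x, e, π⟩ ⟨t, e', π⟩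

/-- Any CEK transition. -/
def CStep (s s' : CState) : Prop :=
  CStep1 s s' ∨ CStep2 s s' ∨ CStepM s s' ∨ CStepE s s'

/-- Initial states. -/
def CState.Initial (s : CState) : Prop :=
  s.code.fv = ∅ ∧ s.env = .nil ∧ s.stack = []

/-- The measure `μ(t̄ | e | π)`: `|t̄| + |t̄'|` if the top of `π` is an argument
    entry `(t̄', e')`, and `|t̄|` otherwise. -/
def measureCEK : CState → ℕ
  | ⟨t, _, .arg u _ :: _⟩ => t.size + u.size
  | ⟨t, _, _⟩ => t.size

/-- Sequences of consecutive commutative transitions, with length. -/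
def CCIter : ℕ → CState → CState → Prop
  | 0, s, s' => s = s'
  | k + 1, s, s' => ∃ s'', (CStep1 s s'' ∨ CStep2 s s'') ∧ CCIter k s'' s'

/-!
Both commutative transitions move the focus into the code counted by `μ`: `→c1` replaces
`|t u|` by `|t| + |u|`, and `→c2` drops `|λx.t|` from `|λx.t| + |u|`, so `μ` drops by at
least one. No transition ever creates a code: each one only moves codes, or immediate
subterms of codes, between the focus, the environments and the stack. Hence every code
occurring anywhere in a reachable state has size at most `|t̄₀|`, so `μ ≤ 2|t̄₀|` there,
which bounds the length of any run of commutative transitions.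
-/

mutual
  def CClo.SizeLE (N : ℕ) : CClo → Prop
    | .mk t e => t.size ≤ N ∧ e.SizeLE N
  def CEnv.SizeLE (N : ℕ) : CEnv → Prop
    | .nil => True
    | .cons _ c e => c.SizeLE N ∧ e.SizeLE N
end

def CEntry.SizeLE (N : ℕ) : CEntry → Prop
  | .arg t e | .fn t e => t.size ≤ N ∧ e.SizeLE N

def CState.SizeLE (N : ℕ) (s : CState) : Prop :=
  s.code.size ≤ N ∧ s.env.SizeLE N ∧ ∀ en ∈ s.stack, en.SizeLE N

theorem CEnv.SizeLE.lookup {N : ℕ} : ∀ {e : CEnv} {x : ℕ} {c : CClo},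
    e.SizeLE N → e.lookup x = some c → c.SizeLE N
  | .nil, _, _, _, h => by simp [CEnv.lookup] at h
  | .cons y c' e, x, c, ⟨hc', he⟩, h => by
    rw [CEnv.lookup] at h
    split at h
    · exact Option.some.inj h ▸ hc'
    · exact he.lookup h

namespace CState

variable {N : ℕ} {s s' : CState}

theorem Initial.sizeLE (h : s.Initial) : s.SizeLE s.code.size := by
  obtain ⟨-, henv, hstack⟩ := h
  exact ⟨le_rfl, henv ▸ trivial, by simp [hstack]⟩

theorem SizeLE.of_cStep1 (h : CStep1 s s') (hs : s.SizeLE N) : s'.SizeLE N := by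
  obtain ⟨t, u, e, π⟩ := h
  obtain ⟨hcode, henv, hstack⟩ := hs
  dsimp only [PTerm.size] at hcode
  refine ⟨show t.size ≤ N by omega, henv, ?_⟩
  rintro en (_ | ⟨_, hen⟩)
  · exact ⟨by omega, henv⟩
  · exact hstack en hen

theorem SizeLE.of_cStep2 (h : CStep2 s s') (hs : s.SizeLE N) : s'.SizeLE N := by
  obtain ⟨x, t, u, e, e', π⟩ := h
  obtain ⟨hcode, henv, hstack⟩ := hs
  obtain ⟨harg, henv'⟩ := hstack _ List.mem_cons_self
  refine ⟨harg, henv', ?_⟩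
  rintro en (_ | ⟨_, hen⟩)
  · exact ⟨hcode, henv⟩
  · exact hstack en (List.mem_cons_of_mem _ hen)

theorem SizeLE.of_cStepM (h : CStepM s s') (hs : s.SizeLE N) : s'.SizeLE N := by
  obtain ⟨x, y, t, u, e, e', π⟩ := h
  obtain ⟨hcode, henv, hstack⟩ := hs
  obtain ⟨hfn, henv'⟩ := hstack _ List.mem_cons_self
  dsimp only [PTerm.size] at hfn
  exact ⟨show t.size ≤ N by omega, ⟨⟨hcode, henv⟩, henv'⟩,
    fun en hen => hstack en (List.mem_cons_of_mem _ hen)⟩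

theorem SizeLE.of_cStepE (h : CStepE s s') (hs : s.SizeLE N) : s'.SizeLE N := by
  obtain ⟨x, t, e, e', π, hlookup⟩ := h
  obtain ⟨-, henv, hstack⟩ := hs
  obtain ⟨hcode, henv'⟩ := henv.lookup hlookup
  exact ⟨hcode, henv', hstack⟩

theorem SizeLE.of_cStep (h : CStep s s') (hs : s.SizeLE N) : s'.SizeLE N := by
  rcases h with h | h | h | h
  exacts [hs.of_cStep1 h, hs.of_cStep2 h, hs.of_cStepM h, hs.of_cStepE h]

theorem sizeLE_of_reflTransGen {s₀ : CState} (h₀ : s₀.Initial)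
    (h : Relation.ReflTransGen CStep s₀ s) : s.SizeLE s₀.code.size := by
  induction h with
  | refl => exact h₀.sizeLE
  | tail _ hstep ih => exact ih.of_cStep hstep

theorem SizeLE.measureCEK_le (hs : s.SizeLE N) : measureCEK s ≤ 2 * N := by
  obtain ⟨t, e, π⟩ := s
  obtain ⟨hcode, -, hstack⟩ := hs
  dsimp only at hcode hstack
  match π, hstack with
  | [], _ => simp only [measureCEK]; omega
  | .arg u _ :: _, hstack =>
    have := (hstack _ List.mem_cons_self).1
    simp only [measureCEK]; omega
  | .fn _ _ :: _, _ => simp only [measureCEK]; omega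

end CState

theorem CStep1.measureCEK_lt {s s' : CState} (h : CStep1 s s') :
    measureCEK s' < measureCEK s := by
  obtain ⟨t, u, e, π⟩ := h
  match π with
  | [] | .arg _ _ :: _ | .fn _ _ :: _ => simp only [measureCEK, PTerm.size]; omega

theorem CStep2.measureCEK_lt {s s' : CState} (h : CStep2 s s') :
    measureCEK s' < measureCEK s := by
  obtain ⟨x, t, u, e, e', π⟩ := h
  simp only [measureCEK, PTerm.size]
  omega

theorem CCIter.le_measureCEK : ∀ {k : ℕ} {s s' : CState}, CCIter k s s' → k ≤ measureCEK s
  | 0, _, _, _ => Nat.zero_le _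
  | _ + 1, _, _, ⟨_, hstep, hrest⟩ => by
    have := hrest.le_measureCEK
    have := hstep.elim CStep1.measureCEK_lt CStep2.measureCEK_lt
    omega

/-- The CEK commutative transitions terminate, with a local linear bound: both
    commutative transitions strictly decrease the measure `μ`, and any sequence
    of consecutive commutative transitions from a reachable state has length at
    most `2·|t̄₀|`, the size of the initial code. -/
theorem cek_commutative_measure_and_local_bound :
    (∀ s s', CStep1 s s' ∨ CStep2 s s' → measureCEK s' < measureCEK s) ∧
    (∀ (s₀ s s' : CState) (k : ℕ),
      s₀.Initial → Relation.ReflTransGen CStep s₀ s →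
      CCIter k s s' → k ≤ 2 * s₀.code.size) := by
  refine ⟨fun s s' h => h.elim CStep1.measureCEK_lt CStep2.measureCEK_lt, ?_⟩
  intro s₀ s s' k h₀ hreach hiter
  exact hiter.le_measureCEK.trans (CState.sizeLE_of_reflTransGen h₀ hreach).measureCEK_le
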